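/- arXiv:2408.00807 — 2 statements merged into one kernel-verified Lean document; each statement's English description precedes it below -/
import Mathlib

section
/- For all positive integers n and m, and 0 < q < 1, the multiple sum over chains n ≥ i_1 ≥ i_2 ≥ ... ≥ i_m ≥ 1 of the product over j of q^{i_j}/(1 - q^{i_j}) equals the single sum over r from 1 to n of [n choose r]_q · (-1)^{r-1} q^{binom(r,2) + m r} / (1 - q^r)^m (Dilcher's identity). -/
noncomputable def qPoch (q a : ℝ) (n : ℕ) : ℝ := ∏ j ∈ Finset.range n, (1 - a * q ^ j)

noncomputable def qBinom (q : ℝ) (n r : ℕ) : ℝ :=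
  if r ≤ n then qPoch q q n / (qPoch q q r * qPoch q q (n - r)) else 0

/-- Multiple sum over chains `top ≥ i₁ ≥ ⋯ ≥ i_m ≥ 1` of `∏ q^{i_j}/(1-q^{i_j})`. -/
noncomputable def dSum (q : ℝ) : ℕ → ℕ → ℝ
  | 0, _ => 1
  | m + 1, top => ∑ i ∈ Finset.Icc 1 top, q ^ i / (1 - q ^ i) * dSum q m i

/-!
Write the right-hand side as `∑ r, [n r]_q c_r x_r ^ m` with `c_r = (-1)^(r-1) q^(r(r-1)/2)` and
`x_r = q^r / (1 - q^r)`. The q-Pascal rule and the absorption identity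
`[n+1, r]_q (1 - q^r) = [n, r-1]_q (1 - q^(n+1))` combine to
`([n+1, r]_q - [n, r]_q) x_r = x_(n+1) [n+1, r]_q`, so the right-hand side satisfies the recursion
`D(m+1, n) = ∑_{i=1}^n x_i D(m, i)` that defines the chain sum. At `m = 0` it equals `1` for
`n ≥ 1`: this is the q-binomial theorem `∑ r, [n r]_q (-1)^r q^(r(r-1)/2) z^r = (z; q)_n` at `z = 1`.
-/

open Finset

variable {q : ℝ}

lemma qPoch_succ (a : ℝ) (n : ℕ) : qPoch q a (n + 1) = qPoch q a n * (1 - a * q ^ n) :=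
  prod_range_succ _ _

lemma qPoch_zero (a : ℝ) : qPoch q a 0 = 1 :=
  prod_range_zero _

lemma one_sub_pow_succ_ne_zero (hq : ∀ k : ℕ, q ^ (k + 1) ≠ 1) (k : ℕ) : 1 - q ^ (k + 1) ≠ 0 :=
  sub_ne_zero.2 (hq k).symm

lemma qPoch_ne_zero (hq : ∀ k : ℕ, q ^ (k + 1) ≠ 1) (n : ℕ) : qPoch q q n ≠ 0 :=
  prod_ne_zero_iff.2 fun j _ => by rw [← pow_succ']; exact one_sub_pow_succ_ne_zero hq j

lemma qBinom_of_lt {n r : ℕ} (h : n < r) : qBinom q n r = 0 :=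
  if_neg (not_le.2 h)

lemma qBinom_self (hq : ∀ k : ℕ, q ^ (k + 1) ≠ 1) (n : ℕ) : qBinom q n n = 1 := by
  rw [qBinom, if_pos le_rfl, Nat.sub_self, qPoch_zero, mul_one, div_self (qPoch_ne_zero hq n)]

lemma qBinom_zero_right (hq : ∀ k : ℕ, q ^ (k + 1) ≠ 1) (n : ℕ) : qBinom q n 0 = 1 := by
  rw [qBinom, if_pos n.zero_le, Nat.sub_zero, qPoch_zero, one_mul, div_self (qPoch_ne_zero hq n)]

lemma qBinom_succ_succ (hq : ∀ k : ℕ, q ^ (k + 1) ≠ 1) (n s : ℕ) :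
    qBinom q (n + 1) (s + 1) = qBinom q n (s + 1) + q ^ (n - s) * qBinom q n s := by
  rcases lt_trichotomy n s with h | rfl | h
  · simp [qBinom_of_lt h, qBinom_of_lt (Nat.succ_lt_succ h), qBinom_of_lt (h.trans s.lt_succ_self)]
  · simp [qBinom_self hq, qBinom_of_lt n.lt_succ_self]
  obtain ⟨k, rfl⟩ := Nat.exists_eq_add_of_lt h
  rw [qBinom, qBinom, qBinom, if_pos (by omega), if_pos (by omega), if_pos (by omega),
    show s + k + 1 + 1 - (s + 1) = k + 1 by omega, show s + k + 1 - (s + 1) = k by omega,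
    show s + k + 1 - s = k + 1 by omega, qPoch_succ q (s + k + 1), qPoch_succ q s, qPoch_succ q k,
    ← pow_succ', ← pow_succ', ← pow_succ']
  have := qPoch_ne_zero hq
  have := one_sub_pow_succ_ne_zero hq s
  have := one_sub_pow_succ_ne_zero hq k
  field_simp
  ring

lemma qBinom_succ_succ_mul (hq : ∀ k : ℕ, q ^ (k + 1) ≠ 1) (n s : ℕ) :
    qBinom q (n + 1) (s + 1) * (1 - q ^ (s + 1)) = qBinom q n s * (1 - q ^ (n + 1)) := by
  rcases lt_or_ge n s with h | h
  · simp [qBinom_of_lt h, qBinom_of_lt (Nat.succ_lt_succ h)]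
  obtain ⟨k, rfl⟩ := Nat.exists_eq_add_of_le h
  rw [qBinom, qBinom, if_pos (by omega), if_pos (by omega), show s + k + 1 - (s + 1) = k by omega,
    Nat.add_sub_cancel_left, qPoch_succ q (s + k), qPoch_succ q s, ← pow_succ', ← pow_succ']
  have := qPoch_ne_zero hq
  have := one_sub_pow_succ_ne_zero hq s
  field_simp

lemma qBinom_sub_mul (hq : ∀ k : ℕ, q ^ (k + 1) ≠ 1) (n s : ℕ) :
    (qBinom q (n + 1) (s + 1) - qBinom q n (s + 1)) * (q ^ (s + 1) / (1 - q ^ (s + 1))) =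
      q ^ (n + 1) / (1 - q ^ (n + 1)) * qBinom q (n + 1) (s + 1) := by
  have hpow : q ^ (n - s) * q ^ (s + 1) * qBinom q n s = q ^ (n + 1) * qBinom q n s := by
    rcases lt_or_ge n s with h | h
    · simp [qBinom_of_lt h]
    · rw [← pow_add, show n - s + (s + 1) = n + 1 by omega]
  have := one_sub_pow_succ_ne_zero hq s
  have := one_sub_pow_succ_ne_zero hq n
  field_simp
  linear_combination q ^ (s + 1) * (1 - q ^ (n + 1)) * qBinom_succ_succ hq n s +
    (1 - q ^ (n + 1)) * hpow - q ^ (n + 1) * qBinom_succ_succ_mul hq n s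

theorem sum_qBinom_mul_pow_eq_qPoch (hq : ∀ k : ℕ, q ^ (k + 1) ≠ 1) (x : ℝ) (n : ℕ) :
    ∑ r ∈ range (n + 1), qBinom q n r * (-1) ^ r * q ^ (r * (r - 1) / 2) * x ^ r = qPoch q x n := by
  induction n with
  | zero => simp [qBinom_self hq, qPoch_zero]
  | succ n ih =>
    let t : ℕ → ℕ → ℝ := fun N r => qBinom q N r * (-1) ^ r * q ^ (r * (r - 1) / 2) * x ^ r
    change ∑ r ∈ range (n + 1), t n r = _ at ih
    change ∑ r ∈ range (n + 2), t (n + 1) r = _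
    have hpascal : ∀ s ∈ range (n + 1), t (n + 1) (s + 1) = t n (s + 1) - x * q ^ n * t n s := by
      intro s hs
      obtain ⟨k, rfl⟩ := Nat.exists_eq_add_of_le (Nat.lt_succ_iff.1 (mem_range.1 hs))
      simp only [t]
      rw [qBinom_succ_succ hq, Nat.triangle_succ, Nat.add_sub_cancel_left]
      ring
    have hlow : t (n + 1) 0 = t n 0 := by simp [t, qBinom_zero_right hq]
    have htop : t n (n + 1) = 0 := by simp [t, qBinom_of_lt n.lt_succ_self]
    rw [sum_range_succ', sum_congr rfl hpascal, sum_sub_distrib, ← mul_sum, ih, hlow,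
      sub_add_eq_add_sub, ← sum_range_succ', sum_range_succ, htop, add_zero, ih, qPoch_succ]
    ring

noncomputable def dilcherSum (q : ℝ) (m n : ℕ) : ℝ :=
  ∑ r ∈ Icc 1 n, qBinom q n r * ((-1) ^ (r - 1) * q ^ (r * (r - 1) / 2)) * (q ^ r / (1 - q ^ r)) ^ m

lemma dilcherSum_zero (hq : ∀ k : ℕ, q ^ (k + 1) ≠ 1) (n : ℕ) : dilcherSum q 0 (n + 1) = 1 := by
  have hvanish : qPoch q 1 (n + 1) = 0 := prod_eq_zero (mem_range.2 n.succ_pos) (by simp)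
  have h := sum_qBinom_mul_pow_eq_qPoch hq 1 (n + 1)
  rw [hvanish, range_eq_Ico, sum_eq_sum_Ico_succ_bot (by omega), Ico_add_one_right_eq_Icc] at h
  have hsign : dilcherSum q 0 (n + 1) =
      -∑ r ∈ Icc 1 (n + 1), qBinom q (n + 1) r * (-1) ^ r * q ^ (r * (r - 1) / 2) * 1 ^ r := by
    rw [dilcherSum, ← sum_neg_distrib]
    refine sum_congr rfl fun r hr => ?_
    obtain ⟨s, rfl⟩ := Nat.exists_eq_add_of_le' (mem_Icc.1 hr).1
    simp only [Nat.add_sub_cancel, pow_succ]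
    ring
  simp only [qBinom_zero_right hq] at h
  linarith

lemma dilcherSum_succ_succ (hq : ∀ k : ℕ, q ^ (k + 1) ≠ 1) (m n : ℕ) :
    dilcherSum q (m + 1) (n + 1) =
      dilcherSum q (m + 1) n + q ^ (n + 1) / (1 - q ^ (n + 1)) * dilcherSum q m (n + 1) := by
  have hextend : dilcherSum q (m + 1) n =
      ∑ r ∈ Icc 1 (n + 1),
        qBinom q n r * ((-1) ^ (r - 1) * q ^ (r * (r - 1) / 2)) * (q ^ r / (1 - q ^ r)) ^ (m + 1) := by
    rw [sum_Icc_succ_top (by omega), qBinom_of_lt n.lt_succ_self, zero_mul, zero_mul, add_zero,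
      dilcherSum]
  rw [hextend, dilcherSum, dilcherSum, mul_sum, ← sum_add_distrib]
  refine sum_congr rfl fun r hr => ?_
  obtain ⟨s, rfl⟩ := Nat.exists_eq_add_of_le' (mem_Icc.1 hr).1
  rw [Nat.add_sub_cancel]
  linear_combination ((-1) ^ s * q ^ ((s + 1) * s / 2) * (q ^ (s + 1) / (1 - q ^ (s + 1))) ^ m) *
    qBinom_sub_mul hq n s

lemma sum_Icc_mul_dilcherSum (hq : ∀ k : ℕ, q ^ (k + 1) ≠ 1) (m n : ℕ) :
    ∑ i ∈ Icc 1 n, q ^ i / (1 - q ^ i) * dilcherSum q m i = dilcherSum q (m + 1) n := by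
  induction n with
  | zero => simp [dilcherSum]
  | succ n ih => rw [sum_Icc_succ_top (by omega), ih, dilcherSum_succ_succ hq]

theorem dSum_eq_dilcherSum (hq : ∀ k : ℕ, q ^ (k + 1) ≠ 1) (m : ℕ) {n : ℕ} (hn : 0 < n) :
    dSum q m n = dilcherSum q m n := by
  induction m generalizing n with
  | zero =>
    obtain ⟨n, rfl⟩ := Nat.exists_eq_add_of_le' hn
    rw [dSum, dilcherSum_zero hq]
  | succ m ih =>
    rw [dSum, ← sum_Icc_mul_dilcherSum hq]
    exact sum_congr rfl fun i hi => by rw [ih (mem_Icc.1 hi).1]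

theorem dilcher_general (q : ℝ) (hq0 : 0 < q) (hq1 : q < 1) (n m : ℕ) (hn : 0 < n) :
    dSum q m n =
      ∑ r ∈ Finset.Icc 1 n,
        qBinom q n r * (-1) ^ (r - 1) * q ^ (r * (r - 1) / 2 + m * r) / (1 - q ^ r) ^ m := by
  have hq : ∀ k : ℕ, q ^ (k + 1) ≠ 1 := fun k => (pow_lt_one₀ hq0.le hq1 k.succ_ne_zero).ne
  rw [dSum_eq_dilcherSum hq m hn, dilcherSum]
  refine sum_congr rfl fun r _ => ?_
  rw [pow_add, div_pow, mul_comm m r, pow_mul]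
  ring

/-- Dilcher's identity. -/
theorem dilcher (q : ℝ) (hq0 : 0 < q) (hq1 : q < 1) (n m : ℕ) (hn : 0 < n) (hm : 0 < m) :
    dSum q m n =
      ∑ r ∈ Finset.Icc 1 n,
        qBinom q n r * (-1) ^ (r - 1) * q ^ (r * (r - 1) / 2 + m * r) / (1 - q ^ r) ^ m :=
  dilcher_general q hq0 hq1 n m hn
end

section
/- For integers 1 ≤ i ≤ n, a nonnegative integer k, and parameters z, q making all denominators nonzero: ∑_{r≥0} binom(k+r, k) (z-1)^r h_{k+r}(q^i/(1-q^i), ..., q^n/(1-q^n)) = [(1-q^i)(q;q)_n (zq;q)_i] / [(1-zq^i)(zq;q)_n (q;q)_i] · h_k(q^i/(1-zq^i), ..., q^n/(1-zq^n)), whenever the series converges. -/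
/-- Complete homogeneous symmetric polynomial `h_k` of the entries of a list. -/
noncomputable def hPoly : List ℝ → ℕ → ℝ
  | _, 0 => 1
  | [], _ + 1 => 0
  | a :: as, k + 1 => a * hPoly (a :: as) k + hPoly as (k + 1)
termination_by l k => (l.length, k)

/-- The list `[f i, f (i+1), …, f n]`. -/
def varList (f : ℕ → ℝ) (i n : ℕ) : List ℝ := (List.range (n + 1 - i)).map fun j => f (i + j)

open Finset

section Recurrence

variable {𝕜 : Type*} [NormedField 𝕜]

theorem eq_sum_range_pow_mul_of_recurrence {θ : 𝕜} {y g : ℕ → 𝕜} (h0 : y 0 = g 0)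
    (hy : ∀ r, y (r + 1) = θ * y r + g (r + 1)) (r : ℕ) :
    y r = ∑ s ∈ range (r + 1), θ ^ s * g (r - s) := by
  induction r with
  | zero => simp [h0]
  | succ r ih =>
    rw [hy, ih, sum_range_succ' _ (r + 1), mul_sum]
    simp [pow_succ', mul_assoc, add_comm]

theorem hasSum_of_recurrence [CompleteSpace 𝕜] {θ G : 𝕜} {y g : ℕ → 𝕜} (hθ : ‖θ‖ < 1)
    (hg : HasSum g G) (hg_norm : Summable fun r => ‖g r‖) (h0 : y 0 = g 0)
    (hy : ∀ r, y (r + 1) = θ * y r + g (r + 1)) {S : 𝕜} (hS : (1 - θ)⁻¹ * G = S) :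
    HasSum y S := by
  have hgeom : Summable fun r => ‖θ ^ r‖ := by
    simpa only [norm_pow] using summable_geometric_of_lt_one (norm_nonneg θ) hθ
  have := hasSum_sum_range_mul_of_summable_norm hgeom hg_norm
  rwa [tsum_geometric_of_norm_lt_one hθ, hg.tsum_eq, hS,
    ← funext (eq_sum_range_pow_mul_of_recurrence h0 hy)] at this

end Recurrence

@[simp] theorem hPoly_zero (L : List ℝ) : hPoly L 0 = 1 := by cases L <;> simp [hPoly]

@[simp] theorem hPoly_nil_succ (m : ℕ) : hPoly [] (m + 1) = 0 := by simp [hPoly]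

theorem hPoly_cons_succ (a : ℝ) (l : List ℝ) (m : ℕ) :
    hPoly (a :: l) (m + 1) = a * hPoly (a :: l) m + hPoly l (m + 1) := by
  rw [hPoly]

theorem hPoly_nil_of_ne_zero {m : ℕ} (hm : m ≠ 0) : hPoly [] m = 0 := by
  obtain ⟨m, rfl⟩ := Nat.exists_eq_succ_of_ne_zero hm
  exact hPoly_nil_succ m

theorem hPoly_singleton (a : ℝ) (m : ℕ) : hPoly [a] m = a ^ m := by
  induction m with
  | zero => simp
  | succ m ih => rw [hPoly_cons_succ, ih, hPoly_nil_succ, pow_succ', add_zero]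

theorem sub_mul_hPoly_cons_cons (a b : ℝ) (l : List ℝ) (m : ℕ) :
    (a - b) * hPoly (a :: b :: l) m = a * hPoly (a :: l) m - b * hPoly (b :: l) m := by
  induction m with
  | zero => simp
  | succ m ih =>
    simp only [hPoly_cons_succ]
    linear_combination a * ih

theorem hPoly_cons_cons_comm (a b : ℝ) (l : List ℝ) (m : ℕ) :
    hPoly (a :: b :: l) m = hPoly (b :: a :: l) m := by
  induction m with
  | zero => simp
  | succ m ih =>
    simp only [hPoly_cons_succ]
    linear_combination sub_mul_hPoly_cons_cons a b l m + b * ih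

theorem List.Perm.hPoly_eq {L L' : List ℝ} (h : L.Perm L') (m : ℕ) :
    hPoly L m = hPoly L' m := by
  induction h generalizing m with
  | nil => rfl
  | cons a _ ih =>
    induction m with
    | zero => simp
    | succ m ihm => rw [hPoly_cons_succ, hPoly_cons_succ, ihm, ih]
  | swap a b l => exact hPoly_cons_cons_comm b a l m
  | trans _ _ ih₁ ih₂ => rw [ih₁, ih₂]

section Summability

variable {x : ℝ}

theorem summable_pow_mul_of_summable_choose_mul {c : ℕ → ℝ} (k : ℕ)
    (h : Summable fun r => ((k + r).choose k : ℝ) * x ^ r * c (k + r)) :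
    Summable fun m => x ^ m * c m := by
  have hdrop : Summable fun r => x ^ r * c (k + r) := by
    refine Summable.of_norm_bounded h.abs fun r => ?_
    have hchoose : (1 : ℝ) ≤ ((k + r).choose k : ℝ) :=
      Nat.one_le_cast.mpr (Nat.choose_pos (Nat.le_add_right k r))
    rw [Real.norm_eq_abs, mul_assoc, abs_mul (_ : ℝ) (x ^ r * _), Nat.abs_cast]
    exact le_mul_of_one_le_left (abs_nonneg _) hchoose
  refine (summable_nat_add_iff k).mp ?_
  simpa only [add_comm _ k, pow_add, mul_assoc] using hdrop.mul_left (x ^ k)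

theorem summable_pow_mul_hPoly_of_cons {a : ℝ} {l : List ℝ}
    (h : Summable fun m => x ^ m * hPoly (a :: l) m) :
    Summable fun m => x ^ m * hPoly l m := by
  refine (summable_nat_add_iff 1).mp ?_
  have hshift := ((summable_nat_add_iff 1).mpr h).sub (h.mul_left (x * a))
  refine hshift.congr fun m => ?_
  rw [hPoly_cons_succ]
  ring

theorem summable_pow_mul_hPoly_of_append {l₁ l₂ : List ℝ}
    (h : Summable fun m => x ^ m * hPoly (l₁ ++ l₂) m) :
    Summable fun m => x ^ m * hPoly l₂ m := by
  induction l₁ with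
  | nil => exact h
  | cons a l ih => exact ih (summable_pow_mul_hPoly_of_cons h)

/-- Dropping a head variable preserves summability (it multiplies the generating function by
`1 - x a`), and by symmetry of `hPoly` any `a ∈ L` can be kept last: a geometric series remains. -/
theorem abs_mul_lt_one_of_summable_pow_mul_hPoly {L : List ℝ}
    (h : Summable fun m => x ^ m * hPoly L m) {a : ℝ} (ha : a ∈ L) : |x * a| < 1 := by
  have hperm : L.Perm (L.erase a ++ [a]) :=
    (List.perm_cons_erase ha).trans (List.perm_append_singleton a _).symm
  have hsingle := summable_pow_mul_hPoly_of_append (l₁ := L.erase a) (l₂ := [a])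
    (by simpa only [hperm.hPoly_eq] using h)
  simp_rw [hPoly_singleton, ← mul_pow] at hsingle
  exact summable_geometric_iff_norm_lt_one.mp hsingle

end Summability

theorem hasSum_choose_mul_pow_mul_hPoly {x : ℝ} (L : List ℝ) (hL : ∀ a ∈ L, |x * a| < 1)
    (k : ℕ) :
    HasSum (fun r => ((k + r).choose k : ℝ) * x ^ r * hPoly L (k + r))
      ((L.map fun a => (1 - x * a)⁻¹).prod * hPoly (L.map fun a => a / (1 - x * a)) k) := by
  induction L generalizing k with
  | nil =>
    convert hasSum_single (f := fun r => ((k + r).choose k : ℝ) * x ^ r * hPoly [] (k + r)) 0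
      fun r hr => by simp [hPoly_nil_of_ne_zero (by omega : k + r ≠ 0)] using 1
    simp
  | cons a l ih =>
    have hxa : ‖x * a‖ < 1 := hL a List.mem_cons_self
    have hl := ih fun b hb => hL b (List.mem_cons_of_mem a hb)
    induction k with
    | zero =>
      refine hasSum_of_recurrence hxa (hl 0) (hl 0).summable.abs (by simp) (fun r => ?_) ?_
      · simp only [zero_add, Nat.choose_zero_right, Nat.cast_one, one_mul, hPoly_cons_succ]
        ring
      · simp
    | succ k ihk =>
      have hg := (ihk.mul_left a).add (hl (k + 1))
      refine hasSum_of_recurrence hxa hg hg.summable.abs (by simp [hPoly_cons_succ])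
        (fun r => ?_) ?_
      · rw [show k + 1 + (r + 1) = k + 1 + r + 1 by ring, show k + (r + 1) = k + 1 + r by ring,
          Nat.choose_succ_succ, hPoly_cons_succ]
        push_cast
        ring
      · simp only [List.map_cons, List.prod_cons, hPoly_cons_succ]
        ring

theorem qPoch_mul_prod_range (q c : ℝ) {i n : ℕ} (hin : i ≤ n) :
    qPoch q (c * q) i * ∏ t ∈ range (n + 1 - i), (1 - c * q ^ (i + t)) =
      (1 - c * q ^ i) * qPoch q (c * q) n := by
  obtain ⟨m, rfl⟩ := Nat.exists_eq_add_of_le hin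
  have hshift (t : ℕ) : c * q ^ (i + (t + 1)) = c * q * q ^ (i + t) := by ring
  rw [show i + m + 1 - i = m + 1 by omega, prod_range_succ', qPoch, qPoch, prod_range_add]
  simp only [hshift, add_zero]
  ring

theorem qPoch_ne_zero_s9 {q c : ℝ} (h : ∀ j, 1 ≤ j → 1 - c * q ^ j ≠ 0) (n : ℕ) :
    qPoch q (c * q) n ≠ 0 :=
  prod_ne_zero_iff.mpr fun j _ => by simpa [pow_succ', mul_assoc] using h (j + 1) (by omega)

theorem prod_varList (f : ℕ → ℝ) (i n : ℕ) :
    (varList f i n).prod = ∏ t ∈ range (n + 1 - i), f (i + t) := by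
  simp [varList, prod_eq_multiset_prod, Multiset.range]

theorem map_varList {f g : ℕ → ℝ} {φ : ℝ → ℝ} {i n : ℕ} (h : ∀ j, i ≤ j → φ (f j) = g j) :
    (varList f i n).map φ = varList g i n := by
  simp only [varList, List.map_map]
  exact List.map_congr_left fun t _ => h _ (Nat.le_add_right i t)

theorem one_sub_sub_one_mul_div_one_sub {w z : ℝ} (hw : 1 - w ≠ 0) :
    1 - (z - 1) * (w / (1 - w)) = (1 - z * w) / (1 - w) := by
  field_simp
  ring

/-- Lemma 3.1. -/
theorem lemma31 (q z : ℝ) (i n k : ℕ) (hi : 1 ≤ i) (hin : i ≤ n)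
    (hden1 : ∀ j : ℕ, 1 ≤ j → 1 - q ^ j ≠ 0)
    (hden2 : ∀ j : ℕ, 1 ≤ j → 1 - z * q ^ j ≠ 0)
    (hs : Summable fun r : ℕ =>
      ((k + r).choose k : ℝ) * (z - 1) ^ r *
        hPoly (varList (fun j => q ^ j / (1 - q ^ j)) i n) (k + r)) :
    (∑' r : ℕ, ((k + r).choose k : ℝ) * (z - 1) ^ r *
        hPoly (varList (fun j => q ^ j / (1 - q ^ j)) i n) (k + r)) =
      (1 - q ^ i) * qPoch q q n * qPoch q (z * q) i /
          ((1 - z * q ^ i) * qPoch q (z * q) n * qPoch q q i) *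
        hPoly (varList (fun j => q ^ j / (1 - z * q ^ j)) i n) k := by
  set L := varList (fun j => q ^ j / (1 - q ^ j)) i n
  have hden (j : ℕ) (hj : i ≤ j) := hden1 j (hi.trans hj)
  have hfactor (j : ℕ) (hj : i ≤ j) := one_sub_sub_one_mul_div_one_sub (z := z) (hden j hj)
  have hsmall (a : ℝ) (ha : a ∈ L) : |(z - 1) * a| < 1 :=
    abs_mul_lt_one_of_summable_pow_mul_hPoly (summable_pow_mul_of_summable_choose_mul k hs) ha
  have hvars : L.map (fun a => a / (1 - (z - 1) * a)) =
      varList (fun j => q ^ j / (1 - z * q ^ j)) i n :=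
    map_varList fun j hj => by rw [hfactor j hj, div_div_div_cancel_right₀ (hden j hj)]
  have hfactors : L.map (fun a => (1 - (z - 1) * a)⁻¹) =
      varList (fun j => (1 - q ^ j) / (1 - z * q ^ j)) i n :=
    map_varList fun j hj => by rw [hfactor j hj, inv_div]
  rw [(hasSum_choose_mul_pow_mul_hPoly L hsmall k).tsum_eq, hvars, hfactors, prod_varList,
    prod_div_distrib]
  congr 1
  have hq := qPoch_mul_prod_range q 1 hin
  simp only [one_mul] at hq
  have hq_ne : qPoch q q i ≠ 0 := by simpa using qPoch_ne_zero_s9 (c := 1) (by simpa using hden1) i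
  rw [← hq, ← qPoch_mul_prod_range q z hin]
  field_simp [qPoch_ne_zero_s9 hden2 i]
end
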